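/- arXiv:1611.02142 — 5 statements merged into one kernel-verified Lean document; each statement's English description precedes it below -/
import Mathlib

section
/- If (b_n) is the increasing enumeration of the multiset union of d sets A_j = { a_i^j + i·c_j : i ∈ ℕ }, where each (a_i^j) is a super-additive non-negative sequence with a_0^j = 0 and each c_j > 0, then (b_n) is itself super-additive: b_{m+n} ≥ b_m + b_n for all m, n. -/
/-!
Let `cnt j N` be the number of terms among `b 0, …, b (N - 1)` that come from `A_j`, so that
`∑ j, cnt j N = N` and `b N` is at most the `cnt j N`-th element of `A_j`, for every `j`.
Since `∑ j, (cnt j m + cnt j n) = m + n < ∑ j, cnt j (m + n + 1)`, some `j` has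
`cnt j m + cnt j n < cnt j (m + n + 1)`: the `(cnt j m + cnt j n)`-th element of `A_j` is one of
`b 0, …, b (m + n)`, and super-additivity inside `A_j` gives
`b m + b n ≤ A_j (cnt j m) + A_j (cnt j n) ≤ A_j (cnt j m + cnt j n) ≤ b (m + n)`.
-/

open Finset

def Superadditive {α : Type*} [Add α] [LE α] (u : ℕ → α) : Prop :=
  ∀ m n, u m + u n ≤ u (m + n)

namespace Superadditive

theorem monotone_of_nonneg {α : Type*} [AddCommMonoid α] [PartialOrder α]
    [IsOrderedAddMonoid α] {u : ℕ → α} (hu : Superadditive u) (h0 : ∀ n, 0 ≤ u n) :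
    Monotone u :=
  monotone_nat_of_le_succ fun n => le_add_of_le_of_nonneg le_rfl (h0 1) |>.trans (hu n 1)

theorem add_natCast_mul {u : ℕ → ℝ} (hu : Superadditive u) (c : ℝ) :
    Superadditive fun n => u n + n * c := by
  intro m n
  push_cast
  linarith [hu m n]

end Superadditive

namespace Nat

theorem infinite_ofPred_of_strictMono {p : ℕ → Prop} {f : ℕ → ℕ} (hf : StrictMono f)
    (hp : ∀ k, p k ↔ k ∈ Set.range f) : (Set.ofPred p).Infinite :=
  (Set.ext hp : Set.ofPred p = _) ▸ Set.infinite_range_of_injective hf.injective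

theorem nth_eq_of_strictMono {p : ℕ → Prop} {f : ℕ → ℕ} (hf : StrictMono f)
    (hp : ∀ k, p k ↔ k ∈ Set.range f) : nth p = f := by
  have hinf := infinite_ofPred_of_strictMono hf hp
  have hall : {n : ℕ | ∀ hf : (Set.ofPred p).Finite, n < hf.toFinset.card} = Set.univ :=
    Set.eq_univ_of_forall fun _ h => absurd h hinf
  funext n
  refine (eq_nth_of_strictMonoOn_of_mapsTo_of_surjOn f ?_ ?_ ?_ (hall ▸ Set.mem_univ n)).symm
    <;> rw [hall]
  · exact fun k hk => by simpa using (hp k).1 hk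
  · exact fun k _ => (hp (f k)).2 ⟨k, rfl⟩
  · exact hf.strictMonoOn _

theorem count_le_iff_le_of_strictMono {p : ℕ → Prop} [DecidablePred p] {f : ℕ → ℕ}
    (hf : StrictMono f) (hp : ∀ k, p k ↔ k ∈ Set.range f) {N i : ℕ} :
    count p N ≤ i ↔ N ≤ f i := by
  have hinf := infinite_ofPred_of_strictMono hf hp
  rw [count_le_iff_le_nth hinf, nth_eq_of_strictMono hf hp]

theorem sum_count_eq_fiber {ι : Type*} [Fintype ι] [DecidableEq ι] (g : ℕ → ι) (N : ℕ) :
    ∑ j, count (fun k => g k = j) N = N := by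
  simp only [count_eq_card_filter_range]
  rw [← card_eq_sum_card_fiberwise fun k _ => mem_univ (g k), card_range]

end Nat

theorem Superadditive.of_merge {ι α : Type*} [Fintype ι] [AddCommMonoid α] [PartialOrder α]
    [IsOrderedAddMonoid α] {v : ι → ℕ → α} (hmono : ∀ j, StrictMono (v j))
    (hsuper : ∀ j, Superadditive (v j)) {b : ℕ → α} (hb : Monotone b) (e : ι × ℕ ≃ ℕ)
    (he : ∀ p, b (e p) = v p.1 p.2) : Superadditive b := by
  classical
  have he_mono (j : ι) : StrictMono fun i => e (j, i) := fun i i' h =>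
    hb.reflect_lt (by simpa only [he] using hmono j h)
  -- As `e (j, ·)` is increasing, the terms of `A_j` among `b 0, …, b (N - 1)` are its first `cnt j N`.
  set cnt : ι → ℕ → ℕ := fun j N => Nat.count (fun k => (e.symm k).1 = j) N
  have hcnt (j : ι) (N i : ℕ) : cnt j N ≤ i ↔ N ≤ e (j, i) := by
    refine Nat.count_le_iff_le_of_strictMono (he_mono j) fun k => ⟨fun h => ?_, ?_⟩
    · exact ⟨(e.symm k).2, by simp [← h]⟩
    · rintro ⟨i, rfl⟩
      simp
  have hb_le (j : ι) (N : ℕ) : b N ≤ v j (cnt j N) :=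
    he (j, cnt j N) ▸ hb ((hcnt j N _).1 le_rfl)
  intro m n
  obtain ⟨j, -, hj⟩ : ∃ j ∈ univ, cnt j m + cnt j n < cnt j (m + n + 1) := by
    refine exists_lt_of_sum_lt ?_
    have hsum (N : ℕ) : ∑ j, cnt j N = N := Nat.sum_count_eq_fiber (fun k => (e.symm k).1) N
    rw [sum_add_distrib, hsum, hsum, hsum]
    omega
  have h_early : e (j, cnt j m + cnt j n) ≤ m + n := by
    have := (hcnt j (m + n + 1) _).not.1 hj.not_ge
    omega
  calc b m + b n ≤ v j (cnt j m) + v j (cnt j n) := add_le_add (hb_le j m) (hb_le j n)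
    _ ≤ v j (cnt j m + cnt j n) := hsuper j _ _
    _ = b (e (j, cnt j m + cnt j n)) := (he (j, _)).symm
    _ ≤ b (m + n) := hb h_early

theorem merge_superadditive_general (d : ℕ)
    (a : Fin d → ℕ → ℝ) (c : Fin d → ℝ)
    (hc : ∀ j, 0 < c j)
    (hnn : ∀ j i, 0 ≤ a j i)
    (hsuper : ∀ j, ∀ m n : ℕ, a j m + a j n ≤ a j (m + n))
    (b : ℕ → ℝ) (hbmono : Monotone b)
    (e : Fin d × ℕ ≃ ℕ)
    (he : ∀ p : Fin d × ℕ, b (e p) = a p.1 p.2 + (p.2 : ℝ) * c p.1) :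
    ∀ m n : ℕ, b m + b n ≤ b (m + n) :=
  Superadditive.of_merge (v := fun j i => a j i + i * c j)
    (fun j => (Superadditive.monotone_of_nonneg (hsuper j) (hnn j)).add_strictMono
      (Nat.strictMono_cast.mul_const (hc j)))
    (fun j => Superadditive.add_natCast_mul (hsuper j) (c j)) hbmono e he

/-- **Super-additivity of the increasing merge.** If `(b n)` is the increasing enumeration
(witnessed by a bijection `e : Fin d × ℕ ≃ ℕ` and monotonicity of `b`) of the multiset union
of the `d` sets `A_j = { a_i^j + i·c_j : i ∈ ℕ }`, where each `(a_i^j)` is a super-additive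
non-negative sequence with `a_0^j = 0` and each `c_j > 0`, then `(b n)` is itself
super-additive: `b (m+n) ≥ b m + b n` for all `m, n`. -/
theorem merge_superadditive (d : ℕ) (hd : 0 < d)
    (a : Fin d → ℕ → ℝ) (c : Fin d → ℝ)
    (hc : ∀ j, 0 < c j)
    (ha0 : ∀ j, a j 0 = 0)
    (hnn : ∀ j i, 0 ≤ a j i)
    (hsuper : ∀ j, ∀ m n : ℕ, a j m + a j n ≤ a j (m + n))
    (b : ℕ → ℝ) (hbmono : Monotone b)
    (e : Fin d × ℕ ≃ ℕ)
    (he : ∀ p : Fin d × ℕ, b (e p) = a p.1 p.2 + (p.2 : ℝ) * c p.1) :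
    ∀ m n : ℕ, b m + b n ≤ b (m + n) :=
  merge_superadditive_general d a c hc hnn hsuper b hbmono e he
end

section
/- Telescoping bound for the cumulative flow-length function: let v_0 = r, v_1, …, v_k be a path from the root in T, with positive numbers H_{v_i} ∈ (0,∞) and edge lengths ℓ(e_i) > 0 for e_i = v_{i-1}v_i, and define φ(e_j) = Π_{i=1}^{j} H_{v_{i-1}}/(H_{v_i} + ℓ(e_i)). Then Σ_{j=1}^{k} φ(e_j)·ℓ(e_j) = H_{v_0}·(1 − Π_{j=1}^{k} H_{v_j}/(H_{v_j}+ℓ(e_j))) ≤ H_{v_0}. -/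
private lemma tfl_aux (H ℓ : ℕ → ℝ) :
    ∀ k : ℕ, (∀ i ≤ k, 0 < H i) → (∀ i, 1 ≤ i → i ≤ k → 0 < ℓ i) →
    (∏ i ∈ Finset.Icc 1 k, H (i - 1) / (H i + ℓ i)) * H k
      = H 0 * ∏ i ∈ Finset.Icc 1 k, H i / (H i + ℓ i) := by
  intro k
  induction k with
  | zero => simp [mul_comm]
  | succ n ih =>
    intro hH hℓ
    have hH' : ∀ i ≤ n, 0 < H i := fun i hi => hH i (hi.trans n.le_succ)
    have hℓ' : ∀ i, 1 ≤ i → i ≤ n → 0 < ℓ i := fun i h1 h2 => hℓ i h1 (h2.trans n.le_succ)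
    have IH := ih hH' hℓ'
    rw [Finset.prod_Icc_succ_top (Nat.succ_le_succ (Nat.zero_le n)),
        Finset.prod_Icc_succ_top (Nat.succ_le_succ (Nat.zero_le n))]
    have hd : H (n + 1) + ℓ (n + 1) ≠ 0 := by
      have := hH (n + 1) le_rfl
      have := hℓ (n + 1) (Nat.succ_le_succ (Nat.zero_le n)) le_rfl
      positivity
    simp only [Nat.add_sub_cancel]
    set A := ∏ i ∈ Finset.Icc 1 n, H (i - 1) / (H i + ℓ i) with hA
    set B := ∏ i ∈ Finset.Icc 1 n, H i / (H i + ℓ i) with hB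
    field_simp
    linear_combination H (n+1) * IH

/-- **Telescoping bound for the cumulative flow-length function.** Let `v_0 = r, v_1, …, v_k`
be a path from the root, with positive numbers `H i = H_{v_i}` and positive edge lengths
`ℓ i = ℓ(e_i)` for the edge `e_i = v_{i-1}v_i` (`1 ≤ i ≤ k`), and define
`φ j = Π_{i=1}^{j} H_{i-1}/(H_i + ℓ_i)`. Then
`Σ_{j=1}^{k} φ j · ℓ j = H 0 · (1 − Π_{j=1}^{k} H j/(H j + ℓ j)) ≤ H 0`. -/
theorem telescoping_flow_length_bound (k : ℕ) (H : ℕ → ℝ) (ℓ : ℕ → ℝ)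
    (hH : ∀ i ≤ k, 0 < H i)
    (hℓ : ∀ i, 1 ≤ i → i ≤ k → 0 < ℓ i) :
    (∑ j ∈ Finset.Icc 1 k,
        (∏ i ∈ Finset.Icc 1 j, H (i - 1) / (H i + ℓ i)) * ℓ j)
      = H 0 * (1 - ∏ j ∈ Finset.Icc 1 k, H j / (H j + ℓ j)) ∧
    (∑ j ∈ Finset.Icc 1 k,
        (∏ i ∈ Finset.Icc 1 j, H (i - 1) / (H i + ℓ i)) * ℓ j) ≤ H 0 := by
  have key : ∀ m : ℕ, (∀ i ≤ m, 0 < H i) → (∀ i, 1 ≤ i → i ≤ m → 0 < ℓ i) →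
      (∑ j ∈ Finset.Icc 1 m,
        (∏ i ∈ Finset.Icc 1 j, H (i - 1) / (H i + ℓ i)) * ℓ j)
      = H 0 * (1 - ∏ j ∈ Finset.Icc 1 m, H j / (H j + ℓ j)) := by
    intro m
    induction m with
    | zero => simp
    | succ n ih =>
      intro hH hℓ
      have hH' : ∀ i ≤ n, 0 < H i := fun i hi => hH i (hi.trans n.le_succ)
      have hℓ' : ∀ i, 1 ≤ i → i ≤ n → 0 < ℓ i := fun i h1 h2 => hℓ i h1 (h2.trans n.le_succ)
      have IH := ih hH' hℓ'
      have aux := tfl_aux H ℓ n hH' hℓ'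
      rw [Finset.sum_Icc_succ_top (Nat.succ_le_succ (Nat.zero_le n)),
          Finset.prod_Icc_succ_top (Nat.succ_le_succ (Nat.zero_le n)),
          Finset.prod_Icc_succ_top (Nat.succ_le_succ (Nat.zero_le n)), IH]
      simp only [Nat.add_sub_cancel]
      have hd : H (n + 1) + ℓ (n + 1) ≠ 0 := by
        have := hH (n + 1) le_rfl
        have := hℓ (n + 1) (Nat.succ_le_succ (Nat.zero_le n)) le_rfl
        positivity
      set A := ∏ i ∈ Finset.Icc 1 n, H (i - 1) / (H i + ℓ i) with hA
      set B := ∏ i ∈ Finset.Icc 1 n, H i / (H i + ℓ i) with hB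
      field_simp
      linear_combination ℓ (n+1) * aux
  have heq := key k hH hℓ
  refine ⟨heq, ?_⟩
  rw [heq]
  have hP : 0 ≤ ∏ j ∈ Finset.Icc 1 k, H j / (H j + ℓ j) := by
    apply Finset.prod_nonneg
    intro i hi
    simp only [Finset.mem_Icc] at hi
    have h1 := hH i hi.2
    have h2 := hℓ i hi.1 hi.2
    positivity
  nlinarith [hH 0 (Nat.zero_le k)]
end

section
/- If (a_n) is a non-negative super-additive sequence with a_0 = 0 and lim a_n/n = H < ∞, and (k(n)) is a non-decreasing sequence of naturals with k(n) → ∞ satisfying b_{k(n)} + k(n)·c ≤ a_n ≤ b_{k(n)+1} + (k(n)+1)·c for a non-negative super-additive sequence (b_k) with lim b_k/k = H' ∈ (0,∞) and a constant c > 0, then lim_{n→∞} k(n)/n = H/(H' + c). -/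
open Filter Topology

/-!
Dividing the sandwich `b (k n) + k n * c ≤ a n ≤ b (k n + 1) + (k n + 1) * c` by `n` gives
`(k n / n) * (b (k n) / k n + c) ≤ a n / n ≤ ((k n + 1) / n) * (b (k n + 1) / (k n + 1) + c)`.
Since `k n → ∞`, both brackets tend to `H' + c > 0`, while `a n / n → H` and `1 / n → 0`,
so `k n / n` is squeezed between two sequences tending to `H / (H' + c)`.
-/

theorem tendsto_of_mul_le_of_le_add_mul {ι : Type*} {l : Filter ι} {u x ε β β' : ι → ℝ}
    {α γ : ℝ} (hγ : 0 < γ) (hu : Tendsto u l (𝓝 α)) (hβ : Tendsto β l (𝓝 γ))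
    (hβ' : Tendsto β' l (𝓝 γ)) (hε : Tendsto ε l (𝓝 0))
    (hlow : ∀ᶠ i in l, x i * β i ≤ u i) (hup : ∀ᶠ i in l, u i ≤ (x i + ε i) * β' i) :
    Tendsto x l (𝓝 (α / γ)) := by
  have hlim_low : Tendsto (fun i => u i / β' i - ε i) l (𝓝 (α / γ)) := by
    simpa using (hu.div hβ' hγ.ne').sub hε
  refine tendsto_of_tendsto_of_tendsto_of_le_of_le' hlim_low (hu.div hβ hγ.ne') ?_ ?_
  · filter_upwards [hup, hβ'.eventually_const_lt hγ] with i hi hpos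
    rw [sub_le_iff_le_add, div_le_iff₀ hpos]
    exact hi
  · filter_upwards [hlow, hβ.eventually_const_lt hγ] with i hi hpos
    exact (le_div_iff₀ hpos).2 hi

theorem div_mul_div_add_eq {m N B c : ℝ} (hm : m ≠ 0) :
    m / N * (B / m + c) = (B + m * c) / N := by
  field_simp

theorem normalized_weight_limit_general (a b : ℕ → ℝ) (k : ℕ → ℕ) (c H H' : ℝ)
    (hH : Tendsto (fun n : ℕ => a n / n) atTop (nhds H))
    (hH' : Tendsto (fun m : ℕ => b m / m) atTop (nhds H'))
    (hH'pos : 0 < H')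
    (hc : 0 < c)
    (hkinf : Tendsto k atTop atTop)
    (hlower : ∀ n, b (k n) + (k n : ℝ) * c ≤ a n)
    (hupper : ∀ n, a n ≤ b (k n + 1) + ((k n : ℝ) + 1) * c) :
    Tendsto (fun n : ℕ => (k n : ℝ) / n) atTop (nhds (H / (H' + c))) := by
  have hk_succ : Tendsto (fun n => k n + 1) atTop atTop :=
    tendsto_atTop_mono (fun n => Nat.le_succ _) hkinf
  have hβ : Tendsto (fun n => b (k n) / k n + c) atTop (𝓝 (H' + c)) :=
    (hH'.comp hkinf).add_const c
  have hβ' : Tendsto (fun n => b (k n + 1) / ((k n : ℝ) + 1) + c) atTop (𝓝 (H' + c)) := by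
    simpa only [Function.comp_def, Nat.cast_add, Nat.cast_one] using (hH'.comp hk_succ).add_const c
  refine tendsto_of_mul_le_of_le_add_mul (by positivity) hH hβ hβ'
    tendsto_one_div_atTop_nhds_zero_nat ?_ (Eventually.of_forall fun n => ?_)
  · filter_upwards [hkinf.eventually_ne_atTop 0] with n hkn
    rw [div_mul_div_add_eq (Nat.cast_ne_zero.2 hkn)]
    exact div_le_div_of_nonneg_right (hlower n) n.cast_nonneg
  · rw [← add_div, div_mul_div_add_eq (Nat.cast_add_one_ne_zero (k n))]
    exact div_le_div_of_nonneg_right (hupper n) n.cast_nonneg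

/-- **Asymptotics of the normalized edge weights.** If `(a n)` is non-negative super-additive
with `a 0 = 0` and `lim a n / n = H < ∞`, and `(k n)` is a non-decreasing sequence of naturals
tending to infinity, sandwiched by `b (k n) + (k n)·c ≤ a n ≤ b (k n + 1) + (k n + 1)·c` for a
non-negative super-additive sequence `(b)` with `lim b k / k = H' ∈ (0, ∞)` and a constant
`c > 0`, then `lim_{n→∞} k n / n = H / (H' + c)`. -/
theorem normalized_weight_limit (a b : ℕ → ℝ) (k : ℕ → ℕ) (c H H' : ℝ)
    (ha0 : a 0 = 0) (hann : ∀ n, 0 ≤ a n)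
    (hasuper : ∀ m n : ℕ, a m + a n ≤ a (m + n))
    (hb0 : b 0 = 0) (hbnn : ∀ n, 0 ≤ b n)
    (hbsuper : ∀ m n : ℕ, b m + b n ≤ b (m + n))
    (hH : Tendsto (fun n : ℕ => a n / n) atTop (nhds H))
    (hH' : Tendsto (fun m : ℕ => b m / m) atTop (nhds H'))
    (hH'pos : 0 < H')
    (hc : 0 < c)
    (hkmono : Monotone k)
    (hkinf : Tendsto k atTop atTop)
    (hlower : ∀ n, b (k n) + (k n : ℝ) * c ≤ a n)
    (hupper : ∀ n, a n ≤ b (k n + 1) + ((k n : ℝ) + 1) * c) :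
    Tendsto (fun n : ℕ => (k n : ℝ) / n) atTop (nhds (H / (H' + c))) :=
  normalized_weight_limit_general a b k c H H' hH hH' hH'pos hc hkinf hlower hupper
end

section
/- If (a_n) is non-negative super-additive with a_0=0 and lim a_n/n = H < ∞, and (k(n)) is non-decreasing with b_{k(n)} + k(n)c ≤ a_n for a non-negative sequence (b_k) with b_k/k → ∞ and c > 0, then k(n)/n → 0. -/
open Filter

/-- **Vanishing normalized weight for subtrees of infinite growth.** If `(a n)` is non-negative
super-additive with `a 0 = 0` and `lim a n / n = H < ∞`, and `(k n)` is non-decreasing with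
`b (k n) + (k n)·c ≤ a n` for a non-negative sequence `(b)` with `b m / m → ∞` and a constant
`c > 0`, then `k n / n → 0`. -/
theorem normalized_weight_vanishes (a b : ℕ → ℝ) (k : ℕ → ℕ) (c H : ℝ)
    (ha0 : a 0 = 0) (hann : ∀ n, 0 ≤ a n)
    (hasuper : ∀ m n : ℕ, a m + a n ≤ a (m + n))
    (hbnn : ∀ n, 0 ≤ b n)
    (hH : Tendsto (fun n : ℕ => a n / n) atTop (nhds H))
    (hbinf : Tendsto (fun m : ℕ => b m / m) atTop atTop)
    (hc : 0 < c)
    (hkmono : Monotone k)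
    (hlower : ∀ n, b (k n) + (k n : ℝ) * c ≤ a n) :
    Tendsto (fun n : ℕ => (k n : ℝ) / n) atTop (nhds 0) := by
  -- H ≥ 0
  have hH0 : 0 ≤ H := by
    refine ge_of_tendsto hH ?_
    filter_upwards [eventually_ge_atTop 1] with n hn
    exact div_nonneg (hann n) (Nat.cast_nonneg n)
  -- a n ≤ n * H
  have key : ∀ n : ℕ, a n ≤ n * H := by
    intro n
    rcases Nat.eq_zero_or_pos n with rfl | hn
    · simp [ha0]
    have hmul : ∀ m : ℕ, (m : ℝ) * a n ≤ a (m * n) := by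
      intro m
      induction m with
      | zero => simp [ha0]
      | succ m ih =>
          have := hasuper (m * n) n
          have h2 : (m + 1) * n = m * n + n := Nat.succ_mul m n
          rw [h2]
          push_cast
          linarith
    have hcomp : Tendsto (fun m : ℕ => a (m * n) / (m * n : ℕ)) atTop (nhds H) := by
      refine hH.comp (tendsto_atTop_atTop_of_monotone ?_ ?_)
      · intro x y hxy; exact Nat.mul_le_mul_right n hxy
      · intro x; exact ⟨x, Nat.le_mul_of_pos_right x hn⟩
    have hle : a n / n ≤ H := by
      refine ge_of_tendsto hcomp ?_
      filter_upwards [eventually_ge_atTop 1] with m hm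
      have hmn : (0:ℝ) < (m * n : ℕ) := by positivity
      rw [div_le_div_iff₀ (by positivity) hmn]
      have h := hmul m
      push_cast at h ⊢
      nlinarith
    rw [div_le_iff₀ (by positivity)] at hle
    linarith
  -- conclude via ε
  rw [Metric.tendsto_atTop]
  intro ε hε
  set C : ℝ := H / ε + 1 with hC
  have hCpos : 0 < C := by positivity
  have hHC : H / C < ε := by
    rw [div_lt_iff₀ hCpos]
    have : ε * C = H + ε := by
      rw [hC]; field_simp
    linarith
  obtain ⟨M, hM⟩ := (tendsto_atTop.mp hbinf C).exists_forall_of_atTop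
  set M' : ℕ := max M 1 with hM'
  refine ⟨⌈(M' : ℝ) / ε⌉₊ + 1, fun n hn => ?_⟩
  have hn1 : 1 ≤ n := le_trans (Nat.le_add_left 1 _) hn
  have hnpos : (0:ℝ) < n := by exact_mod_cast hn1
  have hnε : (M' : ℝ) < ε * n := by
    have : ((M' : ℝ) / ε) < n := by
      calc ((M' : ℝ) / ε) ≤ ⌈(M' : ℝ) / ε⌉₊ := Nat.le_ceil _
        _ < n := by exact_mod_cast Nat.lt_of_lt_of_le (Nat.lt_succ_self _) hn
    rwa [div_lt_iff₀ hε, mul_comm] at this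
  rw [Real.dist_eq, sub_zero, abs_of_nonneg (by positivity)]
  by_cases hkn : k n < M'
  · have : (k n : ℝ) ≤ M' := by exact_mod_cast le_of_lt hkn
    rw [div_lt_iff₀ hnpos]
    linarith
  · push_neg at hkn
    have hk1 : 1 ≤ k n := le_trans (le_max_right M 1) hkn
    have hkpos : (0:ℝ) < k n := by exact_mod_cast hk1
    have hb : C ≤ b (k n) / k n := hM (k n) (le_trans (le_max_left M 1) hkn)
    have hb' : (k n : ℝ) * C ≤ b (k n) := by
      rw [le_div_iff₀ hkpos] at hb; linarith
    have h1 : (k n : ℝ) * C ≤ n * H := by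
      have h2 := hlower n
      have h3 := key n
      nlinarith
    have : (k n : ℝ) / n ≤ H / C := by
      rw [div_le_div_iff₀ hnpos hCpos]
      linarith
    linarith
end

section
/- For the factorial sequence of any subset S of the valuation ring R of a local field, defined greedily by s_n minimizing val(Π_{j<n}(s − s_j)) over s ∈ S, the value n!_S := val(Π_{j<n}(s_n − s_j)) is independent of the greedy choices made. -/
/-!
Write `P_k = ∏_{j<k} (X - s j)`, a monic polynomial of degree `k`. For any `x_0, …, x_{n-1} ∈ S`
the Vandermonde determinant of the `x_i` equals `det (P_k (x_i))`, and by greediness every entry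
of the `k`-th column has valuation at least `k!_s := v (P_k (s k))`. Hence
`v (Vandermonde (x)) ≥ Σ_{k<n} k!_s`, with equality when `x = (s 0, …, s (n-1))`, since then the
Vandermonde product is `∏_{k<n} P_k (s k)`. Comparing two greedy sequences in both directions,
their partial sums `Σ_{k<n} k!` agree for every `n`; as `S` is infinite these values are finite,
so consecutive partial sums can be subtracted.
-/

open Finset Polynomial Matrix

namespace AddValuation

variable {R Γ : Type*} [CommRing R] [LinearOrderedAddCommMonoidWithTop Γ] (v : AddValuation R Γ)

theorem map_prod {ι : Type*} (t : Finset ι) (f : ι → R) :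
    v (∏ i ∈ t, f i) = ∑ i ∈ t, v (f i) := by
  classical
  induction t using Finset.induction_on with
  | empty => simp
  | insert a t ha ih => rw [prod_insert ha, sum_insert ha, v.map_mul, ih]

theorem map_units_int_smul (u : ℤˣ) (x : R) : v (u • x) = v x := by
  rcases Int.units_eq_one_or u with rfl | rfl <;> simp [v.map_neg]

theorem sum_le_map_det {n : Type*} [Fintype n] [DecidableEq n] (M : Matrix n n R) (c : n → Γ)
    (hc : ∀ i j, c j ≤ v (M i j)) : ∑ j, c j ≤ v M.det := by
  rw [det_apply]
  refine v.map_le_sum fun σ _ => ?_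
  rw [v.map_units_int_smul, v.map_prod]
  exact sum_le_sum fun j _ => hc (σ j) j

end AddValuation

namespace Matrix

variable {R : Type*} [CommRing R]

theorem det_vandermonde_eq_det_prod_sub (s : ℕ → R) {n : ℕ} (x : Fin n → R) :
    (vandermonde x).det = (of fun i k : Fin n => ∏ j ∈ range k, (x i - s j)).det := by
  cases subsingleton_or_nontrivial R
  · exact Subsingleton.elim _ _
  have hmonic (k : Fin n) : (∏ j ∈ range k, (X - C (s j))).Monic :=
    monic_prod_of_monic _ _ fun j _ => monic_X_sub_C (s j)
  have hdeg (k : Fin n) : (∏ j ∈ range k, (X - C (s j))).natDegree = (k : ℕ) := by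
    rw [natDegree_prod_of_monic _ _ fun j _ => monic_X_sub_C (s j)]
    simp
  simp [det_eval_matrixOfPolynomials_eq_det_vandermonde x _ hdeg hmonic, eval_prod]

theorem det_vandermonde_eq_prod_range (s : ℕ → R) (n : ℕ) :
    (vandermonde fun i : Fin n => s i).det = ∏ k ∈ range n, ∏ j ∈ range k, (s k - s j) := by
  rw [det_vandermonde, prod_comm' (t' := univ) (s' := fun j => Iio j) (by simp),
    ← Fin.prod_univ_eq_prod_range (fun k => ∏ j ∈ range k, (s k - s j))]
  refine prod_congr rfl fun k _ => ?_
  rw [← Nat.Iio_eq_range, ← Fin.map_valEmbedding_Iio, prod_map]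
  rfl

end Matrix

section Bhargava

variable {R Γ : Type*} [CommRing R] [LinearOrderedAddCommMonoidWithTop Γ]

/-- The quantity that the `n`-th greedy choice minimizes over `t ∈ S`. -/
def greedyVal (v : AddValuation R Γ) (s : ℕ → R) (n : ℕ) (t : R) : Γ :=
  v (∏ j ∈ range n, (t - s j))

/-- Only the minimality of each choice; membership `s n ∈ S` is a separate hypothesis. -/
def IsGreedy (v : AddValuation R Γ) (S : Set R) (s : ℕ → R) : Prop :=
  ∀ n, ∀ t ∈ S, greedyVal v s n (s n) ≤ greedyVal v s n t

variable (v : AddValuation R Γ) {S : Set R} {s s' : ℕ → R}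

theorem sum_greedyVal_le_map_det_vandermonde (hg : IsGreedy v S s) {n : ℕ} (x : Fin n → R)
    (hx : ∀ i, x i ∈ S) :
    ∑ k ∈ range n, greedyVal v s k (s k) ≤ v (vandermonde x).det := by
  rw [← Fin.sum_univ_eq_sum_range (fun k => greedyVal v s k (s k)),
    det_vandermonde_eq_det_prod_sub s x]
  exact v.sum_le_map_det _ _ fun i k => hg k (x i) (hx i)

theorem map_det_vandermonde_eq_sum_greedyVal (n : ℕ) :
    v (vandermonde fun i : Fin n => s i).det = ∑ k ∈ range n, greedyVal v s k (s k) := by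
  rw [det_vandermonde_eq_prod_range, v.map_prod]
  rfl

theorem sum_greedyVal_eq (hs : ∀ n, s n ∈ S) (hs' : ∀ n, s' n ∈ S) (hg : IsGreedy v S s)
    (hg' : IsGreedy v S s') (n : ℕ) :
    ∑ k ∈ range n, greedyVal v s k (s k) = ∑ k ∈ range n, greedyVal v s' k (s' k) :=
  le_antisymm
    ((sum_greedyVal_le_map_det_vandermonde v hg _ fun i => hs' i).trans_eq
      (map_det_vandermonde_eq_sum_greedyVal v n))
    ((sum_greedyVal_le_map_det_vandermonde v hg' _ fun i => hs i).trans_eq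
      (map_det_vandermonde_eq_sum_greedyVal v n))

end Bhargava

open IsDiscreteValuationRing in
theorem greedyVal_self_ne_top {R : Type*} [CommRing R] [IsDomain R] [IsDiscreteValuationRing R]
    {S : Set R} (hS : S.Infinite) {s : ℕ → R} (hg : IsGreedy (addVal R) S s) (n : ℕ) :
    greedyVal (addVal R) s n (s n) ≠ ⊤ := by
  classical
  obtain ⟨t, htS, ht⟩ := hS.exists_notMem_finset ((range n).image s)
  have hprod : ∏ j ∈ range n, (t - s j) ≠ 0 :=
    prod_ne_zero_iff.mpr fun j hj => sub_ne_zero.mpr fun h => ht (h ▸ mem_image_of_mem s hj)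
  exact ne_top_of_le_ne_top (mt addVal_eq_top_iff.mp hprod) (hg n t htS)

theorem bhargava_factorial_well_defined_general
    (R : Type*) [CommRing R] [IsDomain R] [IsDiscreteValuationRing R]
    (S : Set R) (hS : S.Infinite)
    (s s' : ℕ → R)
    (hs : ∀ n, s n ∈ S) (hs' : ∀ n, s' n ∈ S)
    (hgreedy : ∀ n, ∀ t ∈ S,
      IsDiscreteValuationRing.addVal R (∏ j ∈ Finset.range n, (s n - s j)) ≤
        IsDiscreteValuationRing.addVal R (∏ j ∈ Finset.range n, (t - s j)))
    (hgreedy' : ∀ n, ∀ t ∈ S,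
      IsDiscreteValuationRing.addVal R (∏ j ∈ Finset.range n, (s' n - s' j)) ≤
        IsDiscreteValuationRing.addVal R (∏ j ∈ Finset.range n, (t - s' j))) :
    ∀ n : ℕ,
      IsDiscreteValuationRing.addVal R (∏ j ∈ Finset.range n, (s n - s j)) =
        IsDiscreteValuationRing.addVal R (∏ j ∈ Finset.range n, (s' n - s' j)) := by
  intro n
  have hsum := sum_greedyVal_eq _ hs hs' hgreedy hgreedy'
  have hfin : ∑ k ∈ range n, greedyVal _ s' k (s' k) ≠ ⊤ :=
    WithTop.sum_ne_top.mpr fun k _ => greedyVal_self_ne_top hS hgreedy' k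
  have hstep := hsum (n + 1)
  rw [sum_range_succ, sum_range_succ, hsum n] at hstep
  exact WithTop.add_left_cancel hfin hstep

/-- **Well-definedness of Bhargava's factorials for subsets of a local field's valuation
ring.** Let `R` be the valuation ring of a local field (a discrete valuation ring with finite
residue field), with additive valuation `val = DiscreteValuationRing.addVal R`, and let `S` be
an infinite subset of `R`. A sequence `s : ℕ → S` is greedy if each `s n` minimizes
`val (Π_{j<n} (s − s j))` over `s ∈ S`. Then the value
`n!_S := val (Π_{j<n} (s n − s j))` does not depend on the greedy choices: any two greedy
sequences give the same value for every `n`. -/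
theorem bhargava_factorial_well_defined
    (R : Type*) [CommRing R] [IsDomain R] [IsDiscreteValuationRing R]
    [Finite (IsLocalRing.ResidueField R)]
    (S : Set R) (hS : S.Infinite)
    (s s' : ℕ → R)
    (hs : ∀ n, s n ∈ S) (hs' : ∀ n, s' n ∈ S)
    (hgreedy : ∀ n, ∀ t ∈ S,
      IsDiscreteValuationRing.addVal R (∏ j ∈ Finset.range n, (s n - s j)) ≤
        IsDiscreteValuationRing.addVal R (∏ j ∈ Finset.range n, (t - s j)))
    (hgreedy' : ∀ n, ∀ t ∈ S,
      IsDiscreteValuationRing.addVal R (∏ j ∈ Finset.range n, (s' n - s' j)) ≤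
        IsDiscreteValuationRing.addVal R (∏ j ∈ Finset.range n, (t - s' j))) :
    ∀ n : ℕ,
      IsDiscreteValuationRing.addVal R (∏ j ∈ Finset.range n, (s n - s j)) =
        IsDiscreteValuationRing.addVal R (∏ j ∈ Finset.range n, (s' n - s' j)) :=
  bhargava_factorial_well_defined_general R S hS s s' hs hs' hgreedy hgreedy'
end
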